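/- If gcd(m+1, n+1) > 1, then the complete tripartite graph K_{1,m,n} admits no interval edge-coloring. -/

import Mathlib

/-!
Let `d = gcd (m + 1, n + 1) ≥ 2`. An interval of integers whose length is a multiple of `d`
meets every residue class mod `d` equally often. So in an interval coloring every vertex of the
`m`-part sees each residue class `(n + 1) / d` times and every vertex of the `n`-part sees each
`(m + 1) / d` times, while the centre, whose degree `m + n` is two less than a multiple of `d`,
sees some residue class `r` only `(m + n + 2) / d - 1` times. Counting the ends of the edges with
color `≡ r` shows that twice their number is `2 (m + 1) (n + 1) / d - 1`, an odd number.
-/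

/-- The set of colors on edges incident to `v` (the spectrum of `v`). -/
def Spectrum {V : Type*} (G : SimpleGraph V) (c : G.edgeSet → ℕ) (v : V) : Set ℕ :=
  {k | ∃ e : G.edgeSet, v ∈ (e : Sym2 V) ∧ c e = k}

/-- `c` is an interval `t`-coloring of `G`: a proper edge-coloring with colors
`1,…,t`, all colors used, and each vertex's spectrum an interval of integers. -/
def IsIntervalColoring {V : Type*} (G : SimpleGraph V) (t : ℕ) (c : G.edgeSet → ℕ) : Prop :=
  (∀ e, 1 ≤ c e ∧ c e ≤ t) ∧
  (∀ k, 1 ≤ k → k ≤ t → ∃ e, c e = k) ∧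
  (∀ e₁ e₂ : G.edgeSet, e₁ ≠ e₂ → (∃ v, v ∈ (e₁ : Sym2 V) ∧ v ∈ (e₂ : Sym2 V)) →
    c e₁ ≠ c e₂) ∧
  (∀ v : V, ∃ a b : ℕ, Spectrum G c v = Set.Icc a b)

/-- Which part of the tripartition a vertex belongs to. -/
def tripart (m n : ℕ) : Fin 1 ⊕ Fin m ⊕ Fin n → Fin 3
  | .inl _ => 0
  | .inr (.inl _) => 1
  | .inr (.inr _) => 2

/-- The complete tripartite graph `K_{1,m,n}`. -/
def K1mn (m n : ℕ) : SimpleGraph (Fin 1 ⊕ Fin m ⊕ Fin n) where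
  Adj a b := tripart m n a ≠ tripart m n b
  symm := ⟨fun _ _ h => h.symm⟩
  loopless := ⟨fun _ h => h rfl⟩

open Finset

theorem card_Ico_add_mul_filter_mod_eq (a d q r : ℕ) (hr : r < d) :
    #{k ∈ Ico a (a + d * q) | k % d = r} = q := by
  have hper : Function.Periodic (fun k => k % d = r) d := fun k => by simp
  have hcount : Nat.count (fun k => k % d = r) d = 1 := by
    rw [Nat.count_eq_card_filter_range, card_eq_one]
    refine ⟨r, ?_⟩
    ext k
    simp only [mem_filter, mem_range, mem_singleton]
    constructor
    · rintro ⟨hk, rfl⟩; exact (Nat.mod_eq_of_lt hk).symm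
    · rintro rfl; exact ⟨hr, Nat.mod_eq_of_lt hr⟩
  induction q with
  | zero => simp
  | succ q ih =>
    rw [mul_add_one, ← add_assoc, ← Ico_union_Ico_eq_Ico (Nat.le_add_right _ _)
      (Nat.le_add_right _ _), filter_union, card_union_of_disjoint
      (disjoint_filter_filter (Ico_disjoint_Ico_consecutive _ _ _)), ih,
      Nat.filter_Ico_card_eq_of_periodic _ _ _ hper, hcount]

theorem card_Ico_filter_mod_eq_right_add_one (a d L q : ℕ) (hd : 2 ≤ d) (hL : L + 2 = d * q) :
    #{k ∈ Ico a (a + L) | k % d = (a + L) % d} + 1 = q := by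
  have hne : (a + L + 1) % d ≠ (a + L) % d := fun h => by
    have : 1 ≡ 0 [MOD d] := Nat.ModEq.add_left_cancel' (a + L) h
    have := Nat.le_of_dvd one_pos ((Nat.modEq_zero_iff_dvd).1 this)
    omega
  have hIco : Ico a (a + d * q) = insert (a + L + 1) (insert (a + L) (Ico a (a + L))) := by
    rw [← hL, ← add_assoc, Nat.Ico_succ_right_eq_insert_Ico (by omega),
      Nat.Ico_succ_right_eq_insert_Ico (by omega)]
  have := card_Ico_add_mul_filter_mod_eq a d q ((a + L) % d) (Nat.mod_lt _ (by omega))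
  rw [hIco, filter_insert, if_neg hne, filter_insert, if_pos rfl,
    card_insert_of_notMem (by simp)] at this
  exact this

section IntervalColoring

variable {V : Type*} [Fintype V] [DecidableEq V] {G : SimpleGraph V} [DecidableRel G.Adj]

def colorResidueCount (c : G.edgeSet → ℕ) (d r : ℕ) (v : V) : ℕ :=
  #{e : G.edgeSet | v ∈ (e : Sym2 V) ∧ c e % d = r}

theorem sum_colorResidueCount (c : G.edgeSet → ℕ) (d r : ℕ) :
    ∑ v, colorResidueCount c d r v = 2 * #{e : G.edgeSet | c e % d = r} := by
  have hends (e : G.edgeSet) : #{v | v ∈ (e : Sym2 V)} = 2 := by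
    rw [← Sym2.card_toFinset_of_not_isDiag _ (G.not_isDiag_of_mem_edgeSet e.2)]
    congr 1
    ext v
    simp
  have := sum_card_bipartiteAbove_eq_sum_card_bipartiteBelow (s := univ)
    (t := {e : G.edgeSet | c e % d = r}) (r := fun v (e : G.edgeSet) => v ∈ (e : Sym2 V))
  simp only [bipartiteAbove, bipartiteBelow, filter_filter, hends, sum_const, smul_eq_mul] at this
  rw [mul_comm, ← this]
  simp only [colorResidueCount, and_comm]

theorem card_incident_eq_degree (v : V) :
    #{e : G.edgeSet | v ∈ (e : Sym2 V)} = G.degree v := by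
  rw [← Fintype.card_subtype, ← G.card_incidenceSet_eq_degree]
  exact Fintype.card_congr
    ⟨fun e => ⟨e.1.1, e.1.2, e.2⟩, fun e => ⟨⟨e.1, e.2.1⟩, e.2.2⟩, fun _ => rfl, fun _ => rfl⟩

namespace IsIntervalColoring

variable {t : ℕ} {c : G.edgeSet → ℕ}

theorem exists_colorResidueCount_eq (hc : IsIntervalColoring G t c) (v : V) :
    ∃ a, ∀ d r, colorResidueCount c d r v = #{k ∈ Ico a (a + G.degree v) | k % d = r} := by
  obtain ⟨a, b, hspec⟩ := hc.2.2.2 v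
  set I : Finset G.edgeSet := {e | v ∈ (e : Sym2 V)}
  have hinj : Set.InjOn c I := fun e₁ h₁ e₂ h₂ hce => by
    by_contra hne
    exact hc.2.2.1 e₁ e₂ hne ⟨v, (mem_filter.1 h₁).2, (mem_filter.1 h₂).2⟩ hce
  have himage : I.image c = Icc a b := by
    apply coe_injective
    rw [coe_image, coe_Icc, ← hspec]
    ext k
    simp [I, Spectrum]
  have hIcc : Icc a b = Ico a (a + G.degree v) := by
    have hcard := card_incident_eq_degree (G := G) v
    rw [← card_image_of_injOn hinj, himage, Nat.card_Icc] at hcard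
    ext k
    simp only [mem_Icc, mem_Ico]
    omega
  refine ⟨a, fun d r => ?_⟩
  rw [← hIcc, ← himage, filter_image, card_image_of_injOn (hinj.mono (filter_subset _ _)),
    colorResidueCount, filter_filter]

theorem colorResidueCount_eq_of_degree_eq_mul (hc : IsIntervalColoring G t c) (v : V)
    {d q r : ℕ} (hr : r < d) (hdeg : G.degree v = d * q) : colorResidueCount c d r v = q := by
  obtain ⟨a, ha⟩ := hc.exists_colorResidueCount_eq v
  rw [ha, hdeg, card_Ico_add_mul_filter_mod_eq a d q r hr]

theorem exists_colorResidueCount_add_one_eq (hc : IsIntervalColoring G t c) (v : V)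
    {d q : ℕ} (hd : 2 ≤ d) (hdeg : G.degree v + 2 = d * q) :
    ∃ r < d, colorResidueCount c d r v + 1 = q := by
  obtain ⟨a, ha⟩ := hc.exists_colorResidueCount_eq v
  exact ⟨(a + G.degree v) % d, Nat.mod_lt _ (by omega),
    by rw [ha, card_Ico_filter_mod_eq_right_add_one a d _ q hd hdeg]⟩

end IsIntervalColoring

end IntervalColoring

namespace K1mn

variable {m n : ℕ}

instance : DecidableRel (K1mn m n).Adj :=
  fun a b => inferInstanceAs (Decidable (tripart m n a ≠ tripart m n b))

theorem degree_inl (i : Fin 1) : (K1mn m n).degree (.inl i) = m + n := by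
  rw [← SimpleGraph.card_neighborFinset_eq_degree, SimpleGraph.neighborFinset_eq_filter]
  simp [K1mn, tripart, card_filter, Fintype.sum_sum_type, Fin.ext_iff]

theorem degree_inr_inl (x : Fin m) : (K1mn m n).degree (.inr (.inl x)) = n + 1 := by
  rw [← SimpleGraph.card_neighborFinset_eq_degree, SimpleGraph.neighborFinset_eq_filter]
  simp [K1mn, tripart, card_filter, Fintype.sum_sum_type, Fin.ext_iff, add_comm]

theorem degree_inr_inr (y : Fin n) : (K1mn m n).degree (.inr (.inr y)) = m + 1 := by
  rw [← SimpleGraph.card_neighborFinset_eq_degree, SimpleGraph.neighborFinset_eq_filter]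
  simp [K1mn, tripart, card_filter, Fintype.sum_sum_type, Fin.ext_iff, add_comm]

end K1mn

theorem stmt_3 (m n : ℕ)
    (hg : 1 < Nat.gcd (m + 1) (n + 1)) :
    ¬ ∃ (t : ℕ) (c : (K1mn m n).edgeSet → ℕ), 0 < t ∧ IsIntervalColoring (K1mn m n) t c := by
  rintro ⟨t, c, -, hc⟩
  obtain ⟨m', hm'⟩ := Nat.gcd_dvd_left (m + 1) (n + 1)
  obtain ⟨n', hn'⟩ := Nat.gcd_dvd_right (m + 1) (n + 1)
  generalize Nat.gcd (m + 1) (n + 1) = d at hg hm' hn'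
  obtain ⟨r, hrd, hr⟩ := hc.exists_colorResidueCount_add_one_eq (.inl 0) (q := m' + n') hg
    (by rw [K1mn.degree_inl]; linarith)
  have hleft (x : Fin m) : colorResidueCount c d r (.inr (.inl x)) = n' :=
    hc.colorResidueCount_eq_of_degree_eq_mul _ hrd (by rw [K1mn.degree_inr_inl, hn'])
  have hright (y : Fin n) : colorResidueCount c d r (.inr (.inr y)) = m' :=
    hc.colorResidueCount_eq_of_degree_eq_mul _ hrd (by rw [K1mn.degree_inr_inr, hm'])
  have hsum := sum_colorResidueCount c d r
  simp only [Fintype.sum_sum_type, Fin.sum_univ_one, hleft, hright, sum_const, card_univ,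
    Fintype.card_fin, smul_eq_mul] at hsum
  have hsym : (m + 1) * n' = (n + 1) * m' := by rw [hm', hn']; ring
  have hodd : 2 * #{e : (K1mn m n).edgeSet | c e % d = r} + 1 = 2 * ((m + 1) * n') := by
    linarith
  omega
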